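/- Suppose that the underlying undirected graph of the directed edges of G is a tree on V and that the graph of bidirected edges of G is a tree on V. Let s ∈ V and let x ∈ Hhull({s}, G)∖{s}. Then x is an ancestor of {s} in G, the directed path from x to s and the bidirected path from x to s are unique, and the set NC_s(x) — defined as the smallest subset of V containing x such that for every y in it, nec_s(y) is contained in it, where nec_s(y) is the union of the vertex sets of the unique directed path from y to s and the unique bidirected path from y to s — is a hedge formed for Q[{s}] in G. -/

import Mathlib

/-- A semi-Markovian graph on vertex type `V`: a DAG of directed edges together with a
symmetric irreflexive relation of bidirected edges. `dir x y` means there is a directed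
edge from `x` to `y`, i.e. `x` is a parent of `y`. -/
structure SemiMarkovian (V : Type*) where
  dir : V → V → Prop
  bid : V → V → Prop
  bid_symm : ∀ x y, bid x y → bid y x
  bid_irrefl : ∀ x, ¬ bid x x
  acyclic : ∀ x, ¬ Relation.TransGen dir x x

namespace SemiMarkovian

variable {V : Type*}

/-- The induced subgraph of `G` on the vertex set `W`. -/
def induce (G : SemiMarkovian V) (W : Set V) : SemiMarkovian V where
  dir a b := a ∈ W ∧ b ∈ W ∧ G.dir a b
  bid a b := a ∈ W ∧ b ∈ W ∧ G.bid a b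
  bid_symm := fun x y h => ⟨h.2.1, h.1, G.bid_symm x y h.2.2⟩
  bid_irrefl := fun x h => G.bid_irrefl x h.2.2
  acyclic := fun x h =>
    G.acyclic x (h.lift id (fun _ _ hab => hab.2.2))

/-- There is a directed path (possibly of length zero) from `x` to `y` all of whose
vertices lie in `F`. -/
def DirPathIn (G : SemiMarkovian V) (F : Set V) (x y : V) : Prop :=
  x ∈ F ∧ Relation.ReflTransGen (fun a b => b ∈ F ∧ G.dir a b) x y

/-- `x` and `y` are joined by a path of bidirected edges all of whose vertices lie in `F`. -/
def BidConnIn (G : SemiMarkovian V) (F : Set V) (x y : V) : Prop :=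
  x ∈ F ∧ Relation.ReflTransGen (fun a b => b ∈ F ∧ G.bid a b) x y

/-- `x` is an ancestor of the set `S` in `G[F]`. -/
def AncestorIn (G : SemiMarkovian V) (F S : Set V) (x : V) : Prop :=
  ∃ s ∈ S, G.DirPathIn F x s

/-- `G[F]` is a c-component: any two vertices of `F` are joined by a path of bidirected
edges all of whose vertices lie in `F`. -/
def CComponent (G : SemiMarkovian V) (F : Set V) : Prop :=
  ∀ x ∈ F, ∀ y ∈ F, G.BidConnIn F x y

/-- `F` is a hedge formed for `Q[S]` in `G`: `S ⊊ F`, every vertex of `F` is an ancestor of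
`S` in `G[F]`, and `G[F]` is a c-component. -/
def IsHedge (G : SemiMarkovian V) (S F : Set V) : Prop :=
  S ⊂ F ∧ (∀ x ∈ F, G.AncestorIn F S x) ∧ G.CComponent F

/-- The hedge hull of `S` in `G`: the union of `S` with all hedges formed for `Q[S]` in `G`. -/
def Hhull (G : SemiMarkovian V) (S : Set V) : Set V :=
  S ∪ ⋃₀ {F | G.IsHedge S F}

/-- Vertices outside `S` that are parents of some vertex of `S`. -/
def Pa (G : SemiMarkovian V) (S : Set V) : Set V :=
  {x | x ∉ S ∧ ∃ s ∈ S, G.dir x s}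

/-- Vertices outside `S` that have a bidirected edge to some vertex of `S`. -/
def Bid (G : SemiMarkovian V) (S : Set V) : Set V :=
  {x | x ∉ S ∧ ∃ s ∈ S, G.bid x s}

/-- `Pa↔(S) := Pa(S) ∩ Bid(S)`. -/
def PaBid (G : SemiMarkovian V) (S : Set V) : Set V := G.Pa S ∩ G.Bid S

end SemiMarkovian

private lemma chainMem {V : Type*} {r : V → V → Prop} {F : Set V} :
    ∀ {l : List V} {x : V}, List.Chain (fun a b => b ∈ F ∧ r a b) x l → ∀ v ∈ l, v ∈ F := by
  intro l
  induction l with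
  | nil => simp
  | cons b t ih =>
    intro x h v hv
    replace h := List.isChain_cons_cons.1 h
    rcases List.mem_cons.1 hv with rfl | hv
    · exact h.1.1
    · exact ih h.2 v hv

private lemma listOfRTG {V : Type*} {r : V → V → Prop} {F : Set V} {x y : V} (hx : x ∈ F)
    (h : Relation.ReflTransGen (fun a b => b ∈ F ∧ r a b) x y) :
    ∃ p : List V, p.Chain' r ∧ p.head? = some x ∧ p.getLast? = some y ∧ ∀ v ∈ p, v ∈ F := by
  obtain ⟨l, hl, hlast⟩ := List.exists_isChain_cons_of_relationReflTransGen h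
  refine ⟨x :: l, ?_, rfl, ?_, ?_⟩
  · exact List.IsChain.imp (fun a b hab => hab.2) hl
  · rw [List.getLast?_eq_getLast (l := x :: l) (by simp), hlast]
  · intro v hv
    rcases List.mem_cons.1 hv with rfl | hv
    · exact hx
    · exact chainMem hl v hv

private lemma rtgOfList {V : Type*} {r : V → V → Prop} {F : Set V} :
    ∀ (p : List V) (x y : V), p.Chain' r → p.head? = some x → p.getLast? = some y →
      (∀ v ∈ p, v ∈ F) → Relation.ReflTransGen (fun a b => b ∈ F ∧ r a b) x y := by
  intro p
  induction p with
  | nil => simp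
  | cons a t ih =>
    intro x y hc hh hl hm
    simp only [List.head?_cons, Option.some.injEq] at hh
    subst hh
    cases t with
    | nil =>
      simp only [List.getLast?_singleton, Option.some.injEq] at hl
      subst hl; exact .refl
    | cons b t' =>
      simp only [List.Chain', List.isChain_cons_cons] at hc
      rw [List.getLast?_cons_cons] at hl
      refine Relation.ReflTransGen.head ⟨hm b (by simp), hc.1⟩ ?_
      exact ih b y hc.2 rfl hl (fun v hv => hm v (by simp [hv]))

private lemma nodupExtract {V : Type*} [DecidableEq V] {r : V → V → Prop} :
    ∀ (n : ℕ) (l : List V), l.length ≤ n → l.Chain' r →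
      ∃ m : List V, m.Chain' r ∧ m.head? = l.head? ∧ m.getLast? = l.getLast? ∧ m.Nodup ∧
        ∀ v ∈ m, v ∈ l := by
  intro n
  induction n with
  | zero =>
    intro l hl _
    have : l = [] := List.length_eq_zero_iff.1 (Nat.le_zero.1 hl)
    exact ⟨[], by simp [this, List.Chain', List.isChain_nil]⟩
  | succ n ih =>
    intro l hlen hc
    cases l with
    | nil => exact ⟨[], by simp [List.Chain', List.isChain_nil]⟩
    | cons a t =>
      by_cases ha : a ∈ t
      · obtain ⟨t1, t2, rfl⟩ := List.append_of_mem ha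
        have hsuf : (a :: t2) <:+ (a :: (t1 ++ a :: t2)) := ⟨a :: t1, by simp⟩
        have hc2 : (a :: t2).Chain' r := (show List.IsChain r _ from hc).suffix hsuf
        have hlen2 : (a :: t2).length ≤ n := by
          simp only [List.length_cons, List.length_append] at hlen ⊢
          omega
        obtain ⟨m, hm1, hm2, hm3, hm4, hm5⟩ := ih (a :: t2) hlen2 hc2
        refine ⟨m, hm1, by simpa using hm2, ?_, hm4, fun v hv => ?_⟩
        · rw [hm3]
          have : a :: (t1 ++ a :: t2) = (a :: t1) ++ (a :: t2) := by simp
          rw [this, List.getLast?_append]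
          rw [List.getLast?_eq_getLast (l := a :: t2) (by simp)]
          simp [Option.or]
        · have := hm5 v hv
          simp only [List.mem_cons, List.mem_append] at this ⊢
          tauto
      · cases t with
        | nil => exact ⟨[a], by simp [List.Chain', List.isChain_singleton]⟩
        | cons b t' =>
          obtain ⟨m, hm1, hm2, hm3, hm4, hm5⟩ := ih (b :: t')
            (by simp at hlen ⊢; omega) (show List.IsChain r _ from hc).tail
          cases m with
          | nil => simp at hm2
          | cons c m' =>
            simp only [List.head?_cons, Option.some.injEq] at hm2
            subst hm2
            refine ⟨a :: c :: m', ?_, rfl, ?_, ?_, ?_⟩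
            · simp only [List.Chain', List.isChain_cons_cons]
              exact ⟨(List.isChain_cons_cons.1 hc).1, hm1⟩
            · rw [List.getLast?_cons_cons, List.getLast?_cons_cons, hm3]
            · rw [List.nodup_cons]
              exact ⟨fun h => ha (hm5 a h), hm4⟩
            · intro v hv
              rcases List.mem_cons.1 hv with rfl | hv
              · simp
              · exact List.mem_cons.2 (Or.inr (hm5 v hv))

private lemma chain'And {V : Type*} {r q : V → V → Prop} {l : List V}
    (h1 : l.Chain' r) (h2 : l.Chain' q) : l.Chain' (fun a b => r a b ∧ q a b) := by
  simp only [List.Chain', List.isChain_iff_getElem] at *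
  exact fun i hi => ⟨h1 i hi, h2 i hi⟩

private lemma walkOfList {V : Type*} {H : SimpleGraph V} :
    ∀ (p : List V) (x y : V), p.Chain' H.Adj → p.head? = some x → p.getLast? = some y →
      ∃ w : H.Walk x y, w.support = p := by
  intro p
  induction p with
  | nil => simp
  | cons a t ih =>
    intro x y hc hh hl
    simp only [List.head?_cons, Option.some.injEq] at hh
    subst hh
    cases t with
    | nil =>
      simp only [List.getLast?_singleton, Option.some.injEq] at hl
      subst hl
      exact ⟨SimpleGraph.Walk.nil, rfl⟩
    | cons b t' =>
      simp only [List.Chain', List.isChain_cons_cons] at hc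
      rw [List.getLast?_cons_cons] at hl
      obtain ⟨w, hw⟩ := ih b y hc.2 rfl hl
      exact ⟨SimpleGraph.Walk.cons hc.1 w, by simp [hw]⟩

private lemma uniqueChain {V : Type*} {r : V → V → Prop}
    (ht : (SimpleGraph.fromRel r).IsTree) {x y : V} {p₁ p₂ : List V}
    (h₁ : p₁.Chain' r ∧ p₁.head? = some x ∧ p₁.getLast? = some y ∧ p₁.Nodup)
    (h₂ : p₂.Chain' r ∧ p₂.head? = some x ∧ p₂.getLast? = some y ∧ p₂.Nodup) :
    p₁ = p₂ := by
  have adjChain : ∀ (p : List V), p.Chain' r → p.Nodup →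
      p.Chain' (SimpleGraph.fromRel r).Adj := by
    intro p hc hn
    have hne : p.Chain' (· ≠ ·) := List.Pairwise.isChain hn
    exact (show List.IsChain _ p from chain'And hc hne).imp fun a b hab =>
      (SimpleGraph.fromRel_adj r a b).2 ⟨hab.2, Or.inl hab.1⟩
  obtain ⟨w₁, hw₁⟩ := walkOfList p₁ x y (adjChain p₁ h₁.1 h₁.2.2.2) h₁.2.1 h₁.2.2.1
  obtain ⟨w₂, hw₂⟩ := walkOfList p₂ x y (adjChain p₂ h₂.1 h₂.2.2.2) h₂.2.1 h₂.2.2.1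
  have hp₁ : w₁.IsPath := (SimpleGraph.Walk.isPath_def w₁).2 (hw₁ ▸ h₁.2.2.2)
  have hp₂ : w₂.IsPath := (SimpleGraph.Walk.isPath_def w₂).2 (hw₂ ▸ h₂.2.2.2)
  obtain ⟨w, -, hw⟩ := ht.existsUnique_path x y
  rw [← hw₁, ← hw₂, hw w₁ hp₁, hw w₂ hp₂]

private lemma existsNodupChain {V : Type*} [DecidableEq V] {r : V → V → Prop} {F : Set V}
    {x y : V} (hx : x ∈ F)
    (h : Relation.ReflTransGen (fun a b => b ∈ F ∧ r a b) x y) :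
    ∃ p : List V, (p.Chain' r ∧ p.head? = some x ∧ p.getLast? = some y ∧ p.Nodup) ∧
      ∀ v ∈ p, v ∈ F := by
  obtain ⟨p, hp1, hp2, hp3, hp4⟩ := listOfRTG hx h
  obtain ⟨m, hm1, hm2, hm3, hm4, hm5⟩ := nodupExtract p.length p le_rfl hp1
  exact ⟨m, ⟨hm1, hm2.trans hp2, hm3.trans hp3, hm4⟩, fun v hv => hp4 v (hm5 v hv)⟩

/-- Suppose the underlying undirected graph of the directed edges of `G` and
the graph of bidirected edges of `G` are both trees on `V`. Let `s ∈ V` and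
`x ∈ Hhull({s}, G)∖{s}`. Then `x` is an ancestor of `{s}` in `G`; the directed path from
`x` to `s` and the bidirected path from `x` to `s` are unique; and `NC_s(x)`, the smallest
set containing `x` closed under `nec_s` (where `nec_s(y)` is the union of the vertex sets
of the unique directed and bidirected paths from `y` to `s`), is a hedge formed for
`Q[{s}]` in `G`. -/
theorem tree_closure_hedge {V : Type*} [Fintype V] [DecidableEq V] (G : SemiMarkovian V)
    (hdirTree : (SimpleGraph.fromRel G.dir).IsTree)
    (hbidTree : (SimpleGraph.fromRel G.bid).IsTree)
    (s x : V) (hx : x ∈ G.Hhull {s} \ {s})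
    (nec : V → Set V)
    (hnec : ∀ y : V, ∀ p q : List V,
      (p.Chain' G.dir ∧ p.head? = some y ∧ p.getLast? = some s ∧ p.Nodup) →
      (q.Chain' G.bid ∧ q.head? = some y ∧ q.getLast? = some s ∧ q.Nodup) →
      nec y = {v | v ∈ p} ∪ {v | v ∈ q})
    (NC : Set V)
    (hNC : NC = ⋂₀ {T : Set V | x ∈ T ∧ ∀ y ∈ T, nec y ⊆ T}) :
    G.AncestorIn Set.univ {s} x ∧
    (∃! p : List V, p.Chain' G.dir ∧ p.head? = some x ∧ p.getLast? = some s ∧ p.Nodup) ∧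
    (∃! q : List V, q.Chain' G.bid ∧ q.head? = some x ∧ q.getLast? = some s ∧ q.Nodup) ∧
    G.IsHedge {s} NC := by
  obtain ⟨hxH, hxs⟩ := hx
  have hxs' : x ≠ s := fun h => hxs (by simp [h])
  rcases hxH with h1 | ⟨F, hF, hxF⟩
  · exact absurd h1 hxs
  obtain ⟨hsF, hanc, hcc⟩ := hF
  have hsF' : s ∈ F := hsF.1 rfl
  have dchain : ∀ y ∈ F, ∃ p : List V,
      (p.Chain' G.dir ∧ p.head? = some y ∧ p.getLast? = some s ∧ p.Nodup) ∧
        ∀ v ∈ p, v ∈ F := by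
    intro y hy
    obtain ⟨s', hs', hyF, hrtg⟩ := hanc y hy
    rw [Set.mem_singleton_iff] at hs'
    subst hs'
    exact existsNodupChain hyF hrtg
  have bchain : ∀ y ∈ F, ∃ q : List V,
      (q.Chain' G.bid ∧ q.head? = some y ∧ q.getLast? = some s ∧ q.Nodup) ∧
        ∀ v ∈ q, v ∈ F := by
    intro y hy
    obtain ⟨hyF, hrtg⟩ := hcc y hy s hsF'
    exact existsNodupChain hyF hrtg
  have hFclosed : x ∈ F ∧ ∀ y ∈ F, nec y ⊆ F := by
    refine ⟨hxF, fun y hy => ?_⟩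
    obtain ⟨p, hp, hpF⟩ := dchain y hy
    obtain ⟨q, hq, hqF⟩ := bchain y hy
    rw [hnec y p q hp hq]
    rintro v (hv | hv)
    · exact hpF v hv
    · exact hqF v hv
  have hNCsub : NC ⊆ F := by
    rw [hNC]; exact Set.sInter_subset_of_mem hFclosed
  have hxNC : x ∈ NC := by
    rw [hNC]; exact Set.mem_sInter.2 fun T hT => hT.1
  have hNCclosed : ∀ y ∈ NC, nec y ⊆ NC := by
    intro y hy v hv
    rw [hNC] at hy ⊢
    exact Set.mem_sInter.2 fun T hT => hT.2 y (Set.mem_sInter.1 hy T hT) hv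
  -- key: for y ∈ NC, both chains have vertices in NC
  have keyChain : ∀ y ∈ NC, ∃ p q : List V,
      (p.Chain' G.dir ∧ p.head? = some y ∧ p.getLast? = some s ∧ p.Nodup) ∧
      (q.Chain' G.bid ∧ q.head? = some y ∧ q.getLast? = some s ∧ q.Nodup) ∧
      (∀ v ∈ p, v ∈ NC) ∧ (∀ v ∈ q, v ∈ NC) := by
    intro y hy
    obtain ⟨p, hp, hpF⟩ := dchain y (hNCsub hy)
    obtain ⟨q, hq, hqF⟩ := bchain y (hNCsub hy)
    have hsubnec : nec y ⊆ NC := hNCclosed y hy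
    rw [hnec y p q hp hq] at hsubnec
    exact ⟨p, q, hp, hq, fun v hv => hsubnec (Or.inl hv), fun v hv => hsubnec (Or.inr hv)⟩
  obtain ⟨px, hpx, hpxF⟩ := dchain x hxF
  obtain ⟨qx, hqx, hqxF⟩ := bchain x hxF
  refine ⟨?_, ?_, ?_, ?_, ?_, ?_⟩
  · -- ancestor in univ
    refine ⟨s, rfl, Set.mem_univ x, ?_⟩
    have := rtgOfList (F := (Set.univ : Set V)) px x s hpx.1 hpx.2.1 hpx.2.2.1
      (fun v _ => Set.mem_univ v)
    exact this
  · exact ⟨px, hpx, fun p' hp' => uniqueChain hdirTree hp' hpx⟩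
  · exact ⟨qx, hqx, fun q' hq' => uniqueChain hbidTree hq' hqx⟩
  · -- {s} ⊂ NC
    have hsNC : s ∈ NC := by
      obtain ⟨p, q, hp, hq, hpNC, _⟩ := keyChain x hxNC
      exact hpNC s (List.mem_of_mem_getLast? (by rw [hp.2.2.1]; simp))
    constructor
    · intro v hv
      rw [Set.mem_singleton_iff] at hv
      subst hv; exact hsNC
    · intro hsub
      exact hxs' (Set.mem_singleton_iff.1 (hsub hxNC))
  · -- ancestors in NC
    intro y hy
    obtain ⟨p, q, hp, hq, hpNC, _⟩ := keyChain y hy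
    exact ⟨s, rfl, hy, rtgOfList p y s hp.1 hp.2.1 hp.2.2.1 hpNC⟩
  · -- c-component
    intro y hy z hz
    obtain ⟨_, qy, _, hqy, _, hqyNC⟩ := keyChain y hy
    obtain ⟨_, qz, _, hqz, _, hqzNC⟩ := keyChain z hz
    have h1 : Relation.ReflTransGen (fun a b => b ∈ NC ∧ G.bid a b) y s :=
      rtgOfList qy y s hqy.1 hqy.2.1 hqy.2.2.1 hqyNC
    have hrev : qz.reverse.Chain' G.bid := by
      simp only [List.Chain', List.isChain_reverse]
      exact (show List.IsChain _ qz from hqz.1).imp fun a b hab => G.bid_symm a b hab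
    have h2 : Relation.ReflTransGen (fun a b => b ∈ NC ∧ G.bid a b) s z := by
      refine rtgOfList qz.reverse s z hrev ?_ ?_ ?_
      · rw [List.head?_reverse]; exact hqz.2.2.1
      · rw [List.getLast?_reverse]; exact hqz.2.1
      · intro v hv; exact hqzNC v (List.mem_reverse.1 hv)
    exact ⟨hy, h1.trans h2⟩
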